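/- Let E be a real inner product space. For w ∈ E define Π(w) := (τ(‖w‖)/‖w‖)·w if w ≠ 0 and Π(0) := 0, where for a ≥ 0, τ(a) := (2^{1/3}·(√(81a² + 12) + 9a)^{2/3} − 2·3^{1/3}) / (6^{2/3}·(√(81a² + 12) + 9a)^{1/3}). Then for every w ∈ E, the point x := Π(w) satisfies (‖x‖² + 1)·x = w, and x is the unique point of E with this property. -/

import Mathlib

/-!
`tau` is Cardano's formula: if `u³ = (√(81a² + 12) + 9a)/18` then `tau a = u - 1/(3u)`, and
because the two terms have product `1/3` the cubic collapses to
`tau(a)³ + tau(a) = u³ - 1/(27u³) = a`. Since `t ↦ t³ + t` is strictly increasing, `tau a` is its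
only real root. Taking norms in `(‖x‖² + 1)•x = w` gives `‖x‖³ + ‖x‖ = ‖w‖`, hence
`‖x‖ = tau ‖w‖` and `x = (tau(‖w‖)² + 1)⁻¹•w`, which is `Π(w)`.
-/

/-- The explicit formula for the unique real root of the cubic `t³ + t = a`. -/
noncomputable def tau (a : ℝ) : ℝ :=
  ((2 : ℝ) ^ ((1 : ℝ) / 3) * (Real.sqrt (81 * a ^ 2 + 12) + 9 * a) ^ ((2 : ℝ) / 3) -
      2 * (3 : ℝ) ^ ((1 : ℝ) / 3)) /
    ((6 : ℝ) ^ ((2 : ℝ) / 3) * (Real.sqrt (81 * a ^ 2 + 12) + 9 * a) ^ ((1 : ℝ) / 3))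

/-- The rescaling map `Π(w) = (τ(‖w‖)/‖w‖)·w` (and `Π(0) = 0`). -/
noncomputable def Pi' {E : Type*} [NormedAddCommGroup E] [InnerProductSpace ℝ E]
    (w : E) : E :=
  letI := Classical.dec (w = 0)
  if w = 0 then 0 else (tau ‖w‖ / ‖w‖) • w

open Real

lemma rpow_one_div_three_pow_three {x : ℝ} (hx : 0 ≤ x) : (x ^ ((1 : ℝ) / 3)) ^ 3 = x := by
  simpa [one_div] using rpow_inv_natCast_pow hx three_ne_zero

lemma rpow_two_div_three {x : ℝ} (hx : 0 ≤ x) : x ^ ((2 : ℝ) / 3) = (x ^ ((1 : ℝ) / 3)) ^ 2 := by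
  rw [← rpow_natCast, ← rpow_mul hx]
  norm_num

lemma sqrt_sq_add_add_pos {b c : ℝ} (hc : 0 < c) : 0 < √(b ^ 2 + c) + b := by
  have : |b| < √(b ^ 2 + c) := by
    rw [← sqrt_sq_eq_abs]
    exact sqrt_lt_sqrt (sq_nonneg b) (lt_add_of_pos_right _ hc)
  linarith [neg_abs_le b]

lemma sqrt_add_nine_mul_pos (a : ℝ) : 0 < √(81 * a ^ 2 + 12) + 9 * a := by
  have := sqrt_sq_add_add_pos (b := 9 * a) (c := 12) (by norm_num)
  rwa [mul_pow, show (9 : ℝ) ^ 2 = 81 by norm_num] at this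

lemma tau_eq_sub_inv (a : ℝ) :
    ∃ u : ℝ, u ^ 3 = (√(81 * a ^ 2 + 12) + 9 * a) / 18 ∧ tau a = u - (3 * u)⁻¹ := by
  unfold tau
  set d := √(81 * a ^ 2 + 12)
  have hd : 0 < d + 9 * a := sqrt_add_nine_mul_pos a
  set S := (d + 9 * a) ^ ((1 : ℝ) / 3)
  set A := (2 : ℝ) ^ ((1 : ℝ) / 3)
  set B := (3 : ℝ) ^ ((1 : ℝ) / 3)
  have hS3 : S ^ 3 = d + 9 * a := rpow_one_div_three_pow_three hd.le
  have hA3 : A ^ 3 = 2 := rpow_one_div_three_pow_three (by norm_num)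
  have hB3 : B ^ 3 = 3 := rpow_one_div_three_pow_three (by norm_num)
  have hS : 0 < S := by positivity
  have hA : 0 < A := by positivity
  have hB : 0 < B := by positivity
  have h6 : (6 : ℝ) ^ ((2 : ℝ) / 3) = (A * B) ^ 2 := by
    rw [rpow_two_div_three (by norm_num), ← mul_rpow (by norm_num) (by norm_num)]
    norm_num
  refine ⟨S / (A * B ^ 2), ?_, ?_⟩
  · have h18 : (A * B ^ 2) ^ 3 = 18 := by linear_combination B ^ 6 * hA3 + 2 * (B ^ 3 + 3) * hB3
    rw [div_pow, hS3, h18]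
  · rw [rpow_two_div_three hd.le, h6]
    field_simp
    linear_combination B ^ 4 * hA3 + 2 * B * hB3

lemma sub_inv_three_mul_cube_add_self {u : ℝ} (hu : u ≠ 0) :
    (u - (3 * u)⁻¹) ^ 3 + (u - (3 * u)⁻¹) = u ^ 3 - (27 * u ^ 3)⁻¹ := by
  field_simp
  ring

lemma tau_cube_add_self (a : ℝ) : tau a ^ 3 + tau a = a := by
  obtain ⟨u, hu3, htau⟩ := tau_eq_sub_inv a
  set d := √(81 * a ^ 2 + 12)
  have hd : 0 < d + 9 * a := sqrt_add_nine_mul_pos a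
  have hd2 : d ^ 2 = 81 * a ^ 2 + 12 := sq_sqrt (by positivity)
  have hu : u ≠ 0 := by
    rintro rfl
    linarith
  rw [htau, sub_inv_three_mul_cube_add_self hu, hu3]
  field_simp [hd.ne']
  linear_combination 27 * hd2

lemma strictMono_cube_add_self : StrictMono (fun r : ℝ => r ^ 3 + r) :=
  (Odd.strictMono_pow (by decide)).add strictMono_id

lemma eq_tau_of_cube_add_self_eq {r a : ℝ} (h : r ^ 3 + r = a) : r = tau a :=
  strictMono_cube_add_self.injective (h.trans (tau_cube_add_self a).symm)

lemma norm_norm_sq_add_one_smul {E : Type*} [NormedAddCommGroup E] [NormedSpace ℝ E] (x : E) :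
    ‖(‖x‖ ^ 2 + 1) • x‖ = ‖x‖ ^ 3 + ‖x‖ := by
  rw [norm_smul, Real.norm_of_nonneg (by positivity)]
  ring

section

variable {E : Type*} [NormedAddCommGroup E] [InnerProductSpace ℝ E]

lemma Pi'_eq_inv_smul (w : E) : Pi' w = (tau ‖w‖ ^ 2 + 1)⁻¹ • w := by
  rcases eq_or_ne w 0 with rfl | hw
  · simp [Pi']
  · have hw0 : ‖w‖ ≠ 0 := norm_ne_zero_iff.2 hw
    have ht := tau_cube_add_self ‖w‖
    rw [Pi', if_neg hw]
    congr 1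
    field_simp
    linear_combination ht

lemma norm_Pi' (w : E) : ‖Pi' w‖ = tau ‖w‖ := by
  rw [Pi'_eq_inv_smul, norm_smul, norm_inv, Real.norm_of_nonneg (by positivity),
    inv_mul_eq_div, div_eq_iff (by positivity)]
  linear_combination -(tau_cube_add_self ‖w‖)

end

/-- For every `w`, the point `x = Π(w)` is the unique point satisfying
`(‖x‖² + 1)·x = w`. -/
theorem pi_inverts_cubic_map
    {E : Type*} [NormedAddCommGroup E] [InnerProductSpace ℝ E] (w : E) :
    (‖Pi' w‖ ^ 2 + 1) • Pi' w = w ∧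
      ∀ x : E, (‖x‖ ^ 2 + 1) • x = w → x = Pi' w := by
  constructor
  · rw [norm_Pi', Pi'_eq_inv_smul, smul_smul, mul_inv_cancel₀ (by positivity), one_smul]
  · intro x hx
    have hnorm : ‖x‖ = tau ‖w‖ :=
      eq_tau_of_cube_add_self_eq (by rw [← hx, norm_norm_sq_add_one_smul])
    rw [Pi'_eq_inv_smul, ← hnorm, ← hx, smul_smul, inv_mul_cancel₀ (by positivity), one_smul]
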